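/- In the onion graph G = On(k,l,m), let v be the cycle vertex with k pendant vertices and u_l the last vertex of the path (carrying m pendant vertices). Then t_G(v) = k + 1 + C(l+2,2) + m(l+2) and t_G(u_l) = m + C(l+2,2) + l + k(l+2). -/

import Mathlib

/-- The Wiener index of a graph: the sum of distances over all unordered pairs of vertices. -/
noncomputable def wienerIndex {V : Type*} [Fintype V] (G : SimpleGraph V) : ℕ :=
  (∑ u : V, ∑ v : V, G.dist u v) / 2

/-- The transmission of a vertex: the sum of distances from it to all other vertices. -/
noncomputable def transmission {V : Type*} [Fintype V] (G : SimpleGraph V) (x : V) : ℕ :=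
  ∑ u : V, G.dist x u

/-- The onion graph `On(k,l,m)`: a 4-cycle with antipodal vertices `u, v`,
`k` pendant edges attached at `v`, a path on `l` vertices one of whose endpoints
is identified with `u`, and `m` pendant edges attached to the other endpoint of
the path.  Vertices: `Sum.inl 0 = v`, `Sum.inl 1, Sum.inl 2` the two other cycle
vertices, `Sum.inr (Sum.inl i)` the path vertices (with `u` the path vertex `0`
and `u_l` the path vertex `l-1`), `Sum.inr (Sum.inr (Sum.inl _))` the `k`
pendants at `v`, and `Sum.inr (Sum.inr (Sum.inr _))` the `m` pendants at `u_l`. -/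
def onionGraph (k l m : ℕ) : SimpleGraph (Fin 3 ⊕ Fin l ⊕ Fin k ⊕ Fin m) :=
  SimpleGraph.fromRel (fun a b =>
    match a, b with
    | Sum.inl i, Sum.inl j => i = 0 ∧ j ≠ 0
    | Sum.inl i, Sum.inr (Sum.inl p) => i ≠ 0 ∧ (p : ℕ) = 0
    | Sum.inl i, Sum.inr (Sum.inr (Sum.inl _)) => i = 0
    | Sum.inr (Sum.inl p), Sum.inr (Sum.inl q) => (p : ℕ) + 1 = (q : ℕ)
    | Sum.inr (Sum.inl p), Sum.inr (Sum.inr (Sum.inr _)) => (p : ℕ) = l - 1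
    | _, _ => False)

/-! A labelling `d` of the vertices certifies the distances from a root `b` as soon as `d b = 0`,
`d` changes by at most one along edges, and every other vertex has a neighbour one step closer.
For the two roots of the onion graph the labellings are written down explicitly, and the
transmissions are their sums. -/

namespace SimpleGraph

variable {V : Type*} {G : SimpleGraph V}

lemma Walk.le_add_length_of_adj_le {d : V → ℕ} (hd : ∀ x y, G.Adj x y → d x ≤ d y + 1) :
    ∀ {x y : V} (p : G.Walk x y), d x ≤ d y + p.length
  | _, _, .nil => le_rfl
  | _, _, .cons h p => by
    have := hd _ _ h
    have := le_add_length_of_adj_le hd p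
    rw [Walk.length_cons]
    omega

lemma exists_walk_length_eq_of_exists_adj_succ {b : V} {d : V → ℕ} (hb : d b = 0)
    (hparent : ∀ x, x ≠ b → ∃ y, G.Adj y x ∧ d y + 1 = d x) (x : V) :
    ∃ p : G.Walk b x, p.length = d x := by
  induction h : d x generalizing x with
  | zero =>
    by_cases hx : x = b
    · subst hx
      exact ⟨.nil, rfl⟩
    · obtain ⟨y, -, hy⟩ := hparent x hx
      omega
  | succ n ih =>
    obtain ⟨y, hyx, hy⟩ := hparent x (by rintro rfl; omega)
    obtain ⟨p, hp⟩ := ih y (by omega)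
    exact ⟨p.concat hyx, by rw [Walk.length_concat, hp]⟩

theorem dist_eq_of_adj_le {b : V} {d : V → ℕ} (hb : d b = 0)
    (hd : ∀ x y, G.Adj x y → d x ≤ d y + 1)
    (hparent : ∀ x, x ≠ b → ∃ y, G.Adj y x ∧ d y + 1 = d x) (x : V) :
    G.dist b x = d x := by
  obtain ⟨p, hp⟩ := exists_walk_length_eq_of_exists_adj_succ hb hparent x
  obtain ⟨q, hq⟩ := Reachable.exists_walk_length_eq_dist ⟨p⟩
  have hlower := q.reverse.le_add_length_of_adj_le hd
  rw [Walk.length_reverse, hq, hb, zero_add] at hlower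
  exact le_antisymm (hp ▸ dist_le p) hlower

end SimpleGraph

lemma Finset.sum_range_id_eq_choose_two (n : ℕ) : ∑ i ∈ Finset.range n, i = n.choose 2 :=
  (Finset.sum_range_id n).trans (Nat.choose_two_right n).symm

lemma Nat.choose_two_add_two (n : ℕ) : (n + 2).choose 2 = n.choose 2 + 2 * n + 1 := by
  rw [Nat.choose_succ_succ', Nat.choose_succ_succ' n 1, Nat.choose_one_right, Nat.choose_one_right]
  ring

namespace onionGraph

def distFromV (k l m : ℕ) : Fin 3 ⊕ Fin l ⊕ Fin k ⊕ Fin m → ℕ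
  | .inl i => if i = 0 then 0 else 1
  | .inr (.inl p) => p + 2
  | .inr (.inr (.inl _)) => 1
  | .inr (.inr (.inr _)) => l + 2

def distFromEnd (k l m : ℕ) : Fin 3 ⊕ Fin l ⊕ Fin k ⊕ Fin m → ℕ
  | .inl i => if i = 0 then l + 1 else l
  | .inr (.inl p) => l - 1 - p
  | .inr (.inr (.inl _)) => l + 2
  | .inr (.inr (.inr _)) => 1

variable {k l m : ℕ}

lemma distFromV_adj_le {x y : Fin 3 ⊕ Fin l ⊕ Fin k ⊕ Fin m} (h : (onionGraph k l m).Adj x y) :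
    distFromV k l m x ≤ distFromV k l m y + 1 := by
  rcases x with i | p | a | b <;> rcases y with j | q | c | e <;>
    simp only [onionGraph, SimpleGraph.fromRel_adj, ne_eq, Sum.inl.injEq, Sum.inr.injEq,
      reduceCtorEq, not_false_eq_true, true_and, or_false, false_or, or_self, and_false,
      distFromV] at h ⊢ <;>
    (try split_ifs at *) <;> omega

lemma distFromEnd_adj_le {x y : Fin 3 ⊕ Fin l ⊕ Fin k ⊕ Fin m} (h : (onionGraph k l m).Adj x y) :
    distFromEnd k l m x ≤ distFromEnd k l m y + 1 := by
  rcases x with i | p | a | b <;> rcases y with j | q | c | e <;>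
    simp only [onionGraph, SimpleGraph.fromRel_adj, ne_eq, Sum.inl.injEq, Sum.inr.injEq,
      reduceCtorEq, not_false_eq_true, true_and, or_false, false_or, or_self, and_false,
      distFromEnd] at h ⊢ <;>
    (try split_ifs at *) <;> omega

lemma distFromV_exists_parent (hl : 0 < l) (x : Fin 3 ⊕ Fin l ⊕ Fin k ⊕ Fin m)
    (hx : x ≠ .inl 0) :
    ∃ y, (onionGraph k l m).Adj y x ∧ distFromV k l m y + 1 = distFromV k l m x := by
  rcases x with i | ⟨_ | p, hp⟩ | a | b
  · fin_cases i
    · exact absurd rfl hx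
    all_goals exact ⟨.inl 0, by simp [onionGraph], by simp [distFromV]⟩
  · exact ⟨.inl 1, by simp [onionGraph], by simp [distFromV]⟩
  · exact ⟨.inr (.inl ⟨p, by omega⟩), by simp [onionGraph], by simp [distFromV]⟩
  · exact ⟨.inl 0, by simp [onionGraph], by simp [distFromV]⟩
  · exact ⟨.inr (.inl ⟨l - 1, by omega⟩), by simp [onionGraph], by simp [distFromV]; omega⟩

lemma distFromEnd_exists_parent (hl : 0 < l) (x : Fin 3 ⊕ Fin l ⊕ Fin k ⊕ Fin m)
    (hx : x ≠ .inr (.inl ⟨l - 1, by omega⟩)) :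
    ∃ y, (onionGraph k l m).Adj y x ∧ distFromEnd k l m y + 1 = distFromEnd k l m x := by
  rcases x with i | ⟨p, hp⟩ | a | b
  · fin_cases i
    · exact ⟨.inl 1, by simp [onionGraph], by simp [distFromEnd]⟩
    all_goals exact ⟨.inr (.inl ⟨0, hl⟩), by simp [onionGraph], by simp [distFromEnd]; omega⟩
  · have hpl : p + 1 < l := by
      by_contra
      exact hx (by simp; omega)
    exact ⟨.inr (.inl ⟨p + 1, hpl⟩), by simp [onionGraph], by simp [distFromEnd]; omega⟩
  · exact ⟨.inl 0, by simp [onionGraph], by simp [distFromEnd]⟩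
  · exact ⟨.inr (.inl ⟨l - 1, by omega⟩), by simp [onionGraph], by simp [distFromEnd]⟩

lemma sum_distFromV : ∑ x, distFromV k l m x = k + 1 + (l + 2).choose 2 + m * (l + 2) := by
  simp only [distFromV, Fintype.sum_sum_type, Fin.sum_univ_three, Fin.isValue, ↓reduceIte,
    one_ne_zero, Fin.reduceEq, Fin.sum_univ_eq_sum_range (· + 2), Finset.sum_add_distrib,
    Finset.sum_range_id_eq_choose_two, Finset.sum_const, Finset.card_range, Finset.card_univ,
    Fintype.card_fin, smul_eq_mul, Nat.choose_two_add_two]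
  ring

lemma sum_distFromEnd : ∑ x, distFromEnd k l m x = m + (l + 2).choose 2 + l + k * (l + 2) := by
  have hreflect : ∑ i ∈ Finset.range l, (l - 1 - i) = l.choose 2 :=
    (Finset.sum_range_reflect id l).trans (Finset.sum_range_id_eq_choose_two l)
  simp only [distFromEnd, Fintype.sum_sum_type, Fin.sum_univ_three, Fin.isValue, ↓reduceIte,
    one_ne_zero, Fin.reduceEq, Fin.sum_univ_eq_sum_range (l - 1 - ·), hreflect,
    Finset.sum_const, Finset.card_univ, Fintype.card_fin, smul_eq_mul, Nat.choose_two_add_two]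
  ring

end onionGraph

open onionGraph in
/-- transmissions of `v` and of `u_l` in the onion graph. -/
theorem transmission_onion (k l m : ℕ) (hl : 1 ≤ l) :
    transmission (onionGraph k l m) (Sum.inl 0) =
      k + 1 + Nat.choose (l + 2) 2 + m * (l + 2) ∧
    transmission (onionGraph k l m) (Sum.inr (Sum.inl ⟨l - 1, by omega⟩)) =
      m + Nat.choose (l + 2) 2 + l + k * (l + 2) := by
  have hV : ∀ x, (onionGraph k l m).dist (.inl 0) x = distFromV k l m x :=
    SimpleGraph.dist_eq_of_adj_le (by simp [distFromV]) (fun _ _ ↦ distFromV_adj_le)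
      (distFromV_exists_parent hl)
  have hEnd : ∀ x, (onionGraph k l m).dist (.inr (.inl ⟨l - 1, by omega⟩)) x =
      distFromEnd k l m x :=
    SimpleGraph.dist_eq_of_adj_le (by simp [distFromEnd]) (fun _ _ ↦ distFromEnd_adj_le)
      (distFromEnd_exists_parent hl)
  simp only [transmission, hV, hEnd, sum_distFromV, sum_distFromEnd, and_self]
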